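/- Let (Ω,𝓕,P) be a probability space, n ≥ 1, and let T(E) ⊆ L⁰(𝓕,ℂⁿ) be a proper L⁰(𝓕,ℂ)-submodule with the countable concatenation property. Then there exists a nonzero z ∈ L⁰(𝓕,ℂⁿ) with ⟨w, z⟩ = 0 for all w ∈ T(E). Consequently, if f₁,…,fₙ ∈ E* are L⁰(𝓕,ℂ)-independent functionals on an RN module E with the countable concatenation property, then the map T : E → L⁰(𝓕,ℂⁿ), Tx = (f₁(x),…,fₙ(x)), is surjective. -/

import Mathlib

open MeasureTheory

noncomputable instance AEEqFun.instCommRing' {α γ : Type*} [MeasurableSpace α] {μ : Measure α}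
    [TopologicalSpace γ] [CommRing γ] [IsTopologicalRing γ] : CommRing (α →ₘ[μ] γ) :=
  { (inferInstance : AddCommGroup (α →ₘ[μ] γ)),
    (inferInstance : CommMonoid (α →ₘ[μ] γ)) with
    left_distrib := fun f g h => by
      apply AEEqFun.ext
      filter_upwards [AEEqFun.coeFn_mul f (g + h), AEEqFun.coeFn_add g h,
        AEEqFun.coeFn_mul f g, AEEqFun.coeFn_mul f h,
        AEEqFun.coeFn_add (f * g) (f * h)] with a h1 h2 h3 h4 h5
      simp only [Pi.mul_apply, Pi.add_apply] at *
      rw [h1, h2, h5, h3, h4, mul_add]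
    right_distrib := fun f g h => by
      apply AEEqFun.ext
      filter_upwards [AEEqFun.coeFn_mul (f + g) h, AEEqFun.coeFn_add f g,
        AEEqFun.coeFn_mul f h, AEEqFun.coeFn_mul g h,
        AEEqFun.coeFn_add (f * h) (g * h)] with a h1 h2 h3 h4 h5
      simp only [Pi.mul_apply, Pi.add_apply] at *
      rw [h1, h2, h5, h3, h4, add_mul]
    zero_mul := fun f => by
      apply AEEqFun.ext
      filter_upwards [AEEqFun.coeFn_mul 0 f, AEEqFun.coeFn_zero (α := α) (μ := μ) (β := γ)]
        with a h1 h2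
      simp only [Pi.mul_apply] at *
      rw [h1, h2]
      simp
    mul_zero := fun f => by
      apply AEEqFun.ext
      filter_upwards [AEEqFun.coeFn_mul f 0, AEEqFun.coeFn_zero (α := α) (μ := μ) (β := γ)]
        with a h1 h2
      simp only [Pi.mul_apply] at *
      rw [h1, h2]
      simp }

namespace RNM

variable {Ω : Type} [MeasurableSpace Ω] {P : Measure Ω}

/-- the pointwise absolute value `L⁰(𝓕,ℂ) → L⁰(𝓕,ℝ)`. -/
noncomputable def L0abs (ξ : Ω →ₘ[P] ℂ) : Ω →ₘ[P] ℝ :=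
  ξ.comp (fun z => ‖z‖) continuous_norm

/-- the canonical embedding `L⁰(𝓕,ℝ) → L⁰(𝓕,ℂ)`. -/
noncomputable def ofRealC (ξ : Ω →ₘ[P] ℝ) : Ω →ₘ[P] ℂ :=
  ξ.comp Complex.ofReal Complex.continuous_ofReal

/-- pointwise complex conjugation on `L⁰(𝓕,ℂ)`. -/
noncomputable def conjC (ξ : Ω →ₘ[P] ℂ) : Ω →ₘ[P] ℂ :=
  ξ.comp (fun z => starRingEnd ℂ z) Complex.continuous_conj

/-- `ξ ∈ L⁰₊₊`, i.e. `ξ > 0` a.e. on `Ω`. -/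
def L0pos (ξ : Ω →ₘ[P] ℝ) : Prop := ∀ᵐ ω ∂P, 0 < ξ ω

/-- `ξ < η` (a.e.) on the whole of `Ω`. -/
def ltAE (ξ η : Ω →ₘ[P] ℝ) : Prop := ∀ᵐ ω ∂P, ξ ω < η ω

/-- the equivalence class `Ĩ_A ∈ L⁰(𝓕,ℂ)` of the indicator of a measurable set `A`. -/
noncomputable def indC (A : Set Ω) (hA : MeasurableSet A) : Ω →ₘ[P] ℂ :=
  AEEqFun.mk (A.indicator fun _ => (1 : ℂ)) (aestronglyMeasurable_const.indicator hA)

/-- the equivalence class `Ĩ_A ∈ L⁰(𝓕,ℝ)` of the indicator of a measurable set `A`. -/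
noncomputable def indR (A : Set Ω) (hA : MeasurableSet A) : Ω →ₘ[P] ℝ :=
  AEEqFun.mk (A.indicator fun _ => (1 : ℝ)) (aestronglyMeasurable_const.indicator hA)

section AELemmas

lemma L0abs_ae (ξ : Ω →ₘ[P] ℂ) : ∀ᵐ ω ∂P, (L0abs ξ) ω = ‖ξ ω‖ :=
  AEEqFun.coeFn_comp _ _ ξ

lemma le_ae {ξ η : Ω →ₘ[P] ℝ} (h : ξ ≤ η) : ∀ᵐ ω ∂P, ξ ω ≤ η ω :=
  AEEqFun.coeFn_le.2 h

lemma le_of_ae {ξ η : Ω →ₘ[P] ℝ} (h : ∀ᵐ ω ∂P, ξ ω ≤ η ω) : ξ ≤ η :=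
  AEEqFun.coeFn_le.1 h

lemma mul_ae {γ : Type*} [TopologicalSpace γ] [CommRing γ] [IsTopologicalRing γ]
    (ξ η : Ω →ₘ[P] γ) : ∀ᵐ ω ∂P, (ξ * η) ω = ξ ω * η ω :=
  AEEqFun.coeFn_mul ξ η

lemma add_ae {γ : Type*} [TopologicalSpace γ] [AddGroup γ] [IsTopologicalAddGroup γ]
    (ξ η : Ω →ₘ[P] γ) : ∀ᵐ ω ∂P, (ξ + η) ω = ξ ω + η ω :=
  AEEqFun.coeFn_add ξ η

lemma sub_ae {γ : Type*} [TopologicalSpace γ] [AddGroup γ] [IsTopologicalAddGroup γ]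
    (ξ η : Ω →ₘ[P] γ) : ∀ᵐ ω ∂P, (ξ - η) ω = ξ ω - η ω :=
  AEEqFun.coeFn_sub ξ η

lemma zero_ae (γ : Type*) [TopologicalSpace γ] [Zero γ] :
    ∀ᵐ ω ∂P, (0 : Ω →ₘ[P] γ) ω = 0 :=
  AEEqFun.coeFn_zero

lemma one_ae (γ : Type*) [TopologicalSpace γ] [One γ] :
    ∀ᵐ ω ∂P, (1 : Ω →ₘ[P] γ) ω = 1 :=
  AEEqFun.coeFn_one

end AELemmas

/-- a countable measurable partition of `Ω`. -/
structure IsMPartition (A : ℕ → Set Ω) : Prop where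
  meas : ∀ n, MeasurableSet (A n)
  disj : Pairwise (Function.onFun Disjoint A)
  cover : (⋃ n, A n) = Set.univ

section Module

variable {E : Type*} [AddCommGroup E] [Module (Ω →ₘ[P] ℂ) E]

variable (P E) in
/-- `E` has the countable concatenation property. -/
def HasCCP : Prop :=
  ∀ (A : ℕ → Set Ω) (hA : IsMPartition A) (x : ℕ → E),
    ∃ x0 : E, ∀ n, indC (P := P) (A n) (hA.meas n) • x0 = indC (P := P) (A n) (hA.meas n) • x n

/-- a subset `S` of `E` has the countable concatenation property. -/
def SetCCP (S : Set E) : Prop :=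
  ∀ (A : ℕ → Set Ω) (hA : IsMPartition A) (x : ℕ → E), (∀ n, x n ∈ S) →
    ∃ x0 ∈ S, ∀ n, indC (P := P) (A n) (hA.meas n) • x0 = indC (P := P) (A n) (hA.meas n) • x n

/-- the countable concatenation hull `H_cc(S)` of a subset `S` of `E`. -/
def Hcc (S : Set E) : Set E :=
  {x | ∃ (A : ℕ → Set Ω) (hA : IsMPartition A) (m : ℕ → E), (∀ n, m n ∈ S) ∧
    ∀ n, indC (P := P) (A n) (hA.meas n) • x = indC (P := P) (A n) (hA.meas n) • m n}

/-- `L⁰`-convexity of a subset of an `L⁰(𝓕,ℂ)`-module. -/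
def L0Convex (S : Set E) : Prop :=
  ∀ x ∈ S, ∀ y ∈ S, ∀ ξ : Ω →ₘ[P] ℝ, 0 ≤ ξ → ξ ≤ 1 →
    ofRealC ξ • x + ofRealC (1 - ξ) • y ∈ S

/-- the random-norm axioms for `nrm : E → L⁰₊`, making `(E, nrm)` an `RN` module over `ℂ`. -/
structure IsRNNorm (nrm : E → (Ω →ₘ[P] ℝ)) : Prop where
  nonneg : ∀ x, 0 ≤ nrm x
  eq_zero_iff : ∀ x, nrm x = 0 ↔ x = 0
  smul_eq : ∀ (ξ : Ω →ₘ[P] ℂ) (x : E), nrm (ξ • x) = L0abs ξ * nrm x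
  add_le : ∀ x y, nrm (x + y) ≤ nrm x + nrm y

/-- the submodule of `P`-a.e. bounded random linear functionals on `(E, nrm)`:
the random conjugate space `E*`. -/
noncomputable def rdual (nrm : E → (Ω →ₘ[P] ℝ)) :
    Submodule (Ω →ₘ[P] ℂ) (E →ₗ[Ω →ₘ[P] ℂ] (Ω →ₘ[P] ℂ)) where
  carrier := {f | ∃ ξ : Ω →ₘ[P] ℝ, 0 ≤ ξ ∧ ∀ x, L0abs (f x) ≤ ξ * nrm x}
  zero_mem' := by
    refine ⟨0, le_refl 0, fun x => ?_⟩
    apply le_of_ae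
    have e0 : ((0 : E →ₗ[Ω →ₘ[P] ℂ] (Ω →ₘ[P] ℂ)) x) = (0 : Ω →ₘ[P] ℂ) := rfl
    filter_upwards [L0abs_ae ((0 : E →ₗ[Ω →ₘ[P] ℂ] (Ω →ₘ[P] ℂ)) x),
      mul_ae (0 : Ω →ₘ[P] ℝ) (nrm x), zero_ae ℝ, zero_ae ℂ] with ω h1 h2 h3 h4
    rw [h1, h2, h3, e0, h4]
    simp
  add_mem' := by
    rintro f g ⟨ξ, hξ0, hξ⟩ ⟨η, hη0, hη⟩
    have hsum : (0 : Ω →ₘ[P] ℝ) ≤ ξ + η := by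
      apply le_of_ae
      filter_upwards [le_ae hξ0, le_ae hη0, add_ae ξ η, zero_ae ℝ] with ω h1 h2 h3 h4
      rw [h3, h4]
      rw [h4] at h1 h2
      linarith
    refine ⟨ξ + η, hsum, fun x => ?_⟩
    apply le_of_ae
    have e1 : ((f + g) x) = f x + g x := rfl
    filter_upwards [L0abs_ae ((f + g) x), add_ae (f x) (g x),
      mul_ae (ξ + η) (nrm x), add_ae ξ η, mul_ae ξ (nrm x), mul_ae η (nrm x),
      le_ae (hξ x), le_ae (hη x), L0abs_ae (f x), L0abs_ae (g x)]
      with ω h1 h2 h3 h4 h5 h6 h7 h8 h9 h10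
    rw [h1, h3, h4, e1, h2]
    rw [h9, h5] at h7
    rw [h10, h6] at h8
    calc ‖f x ω + g x ω‖ ≤ ‖f x ω‖ + ‖g x ω‖ :=
          norm_add_le _ _
      _ ≤ ξ ω * nrm x ω + η ω * nrm x ω := add_le_add h7 h8
      _ = (ξ ω + η ω) * nrm x ω := by ring
  smul_mem' := by
    rintro c f ⟨ξ, hξ0, hξ⟩
    have hpos : (0 : Ω →ₘ[P] ℝ) ≤ L0abs c * ξ := by
      apply le_of_ae
      filter_upwards [mul_ae (L0abs c) ξ, L0abs_ae c, le_ae hξ0, zero_ae ℝ]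
        with ω h1 h2 h3 h4
      rw [h1, h2, h4]
      rw [h4] at h3
      positivity
    refine ⟨L0abs c * ξ, hpos, fun x => ?_⟩
    apply le_of_ae
    have e1 : ((c • f) x) = c * f x := rfl
    filter_upwards [L0abs_ae ((c • f) x), mul_ae c (f x),
      mul_ae (L0abs c * ξ) (nrm x), mul_ae (L0abs c) ξ, L0abs_ae c,
      le_ae (hξ x), L0abs_ae (f x), mul_ae ξ (nrm x)] with ω h1 h2 h3 h4 h5 h6 h7 h8
    rw [h1, h3, h4, h5, e1, h2]
    rw [h7, h8] at h6
    have h0 : (0:ℝ) ≤ ‖c ω‖ := norm_nonneg _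
    calc ‖c ω * f x ω‖ = ‖c ω‖ * ‖f x ω‖ := norm_mul _ _
      _ ≤ ‖c ω‖ * (ξ ω * nrm x ω) := mul_le_mul_of_nonneg_left h6 h0
      _ = ‖c ω‖ * ξ ω * nrm x ω := by ring

/-- the conjugate random norm `‖f‖* = ⋁{|f(y)| : ‖y‖ ≤ 1}` (the lattice supremum, when
it exists). -/
noncomputable def dnorm (nrm : E → (Ω →ₘ[P] ℝ))
    (f : E →ₗ[Ω →ₘ[P] ℂ] (Ω →ₘ[P] ℂ)) : Ω →ₘ[P] ℝ := by
  classical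
  exact if h : ∃ s : Ω →ₘ[P] ℝ, IsLUB {a | ∃ y : E, nrm y ≤ 1 ∧ a = L0abs (f y)} s
    then h.choose else 0

/-- the random natural embedding of `E` into functionals on its random conjugate space. -/
noncomputable def Jmap (nrm : E → (Ω →ₘ[P] ℝ)) (x : E) :
    (↥(rdual nrm)) →ₗ[Ω →ₘ[P] ℂ] (Ω →ₘ[P] ℂ) where
  toFun f := f.1 x
  map_add' f g := rfl
  map_smul' c f := rfl

end Module

section Topologies

/-- a topology built from a directed family of "balls". -/
def ballTop {X ι : Type*} [Nonempty ι] (ball : X → ι → Set X)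
    (dir : ∀ x i j, ∃ k, ball x k ⊆ ball x i ∩ ball x j) : TopologicalSpace X where
  IsOpen B := ∀ x ∈ B, ∃ i, ball x i ⊆ B
  isOpen_univ := fun x _ => ⟨Classical.arbitrary ι, fun _ _ => trivial⟩
  isOpen_inter := fun B C hB hC x hx => by
    obtain ⟨i, hi⟩ := hB x hx.1
    obtain ⟨j, hj⟩ := hC x hx.2
    obtain ⟨k, hk⟩ := dir x i j
    exact ⟨k, fun y hy => ⟨hi (hk hy).1, hj (hk hy).2⟩⟩
  isOpen_sUnion := fun S hS x hx => by
    obtain ⟨B, hB, hxB⟩ := hx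
    obtain ⟨i, hi⟩ := hS B hB x hxB
    exact ⟨i, fun y hy => ⟨B, hB, hi hy⟩⟩

instance L0posNonempty : Nonempty {ε : Ω →ₘ[P] ℝ // L0pos ε} := by
  refine ⟨⟨1, ?_⟩⟩
  filter_upwards [one_ae (P := P) ℝ] with ω h
  rw [h]; exact one_pos

instance : Nonempty {e : ℝ // 0 < e} := ⟨⟨1, one_pos⟩⟩

instance : Nonempty {l : ℝ // 0 < l ∧ l < 1} := ⟨⟨1/2, by norm_num⟩⟩

lemma L0pos_inf {ε δ : Ω →ₘ[P] ℝ} (hε : L0pos ε) (hδ : L0pos δ) : L0pos (ε ⊓ δ) := by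
  filter_upwards [hε, hδ, AEEqFun.coeFn_inf ε δ] with ω h1 h2 h3
  rw [h3]; exact lt_inf_iff.2 ⟨h1, h2⟩

lemma ltAE_inf {a ε δ : Ω →ₘ[P] ℝ} (h : ltAE a (ε ⊓ δ)) : ltAE a ε ∧ ltAE a δ := by
  constructor
  · filter_upwards [h, AEEqFun.coeFn_inf ε δ] with ω h1 h2
    rw [h2] at h1; exact h1.trans_le inf_le_left
  · filter_upwards [h, AEEqFun.coeFn_inf ε δ] with ω h1 h2
    rw [h2] at h1; exact h1.trans_le inf_le_right

variable {E : Type*} [AddCommGroup E] [Module (Ω →ₘ[P] ℂ) E]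

/-- the locally `L⁰`-convex topology `𝓣_c` on an `RN` module `(E, nrm)`. -/
noncomputable def TcTop (nrm : E → (Ω →ₘ[P] ℝ)) : TopologicalSpace E :=
  ballTop (ι := {ε : Ω →ₘ[P] ℝ // L0pos ε})
    (fun x ε => {y | ltAE (nrm (y - x)) ε.1})
    (by
      rintro x ⟨ε, hε⟩ ⟨δ, hδ⟩
      exact ⟨⟨ε ⊓ δ, L0pos_inf hε hδ⟩, fun y hy => ⟨(ltAE_inf hy).1, (ltAE_inf hy).2⟩⟩)

/-- the `(ε,λ)`-topology `𝓣_{ε,λ}` on an `RN` module `(E, nrm)`. -/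
noncomputable def TelTop (nrm : E → (Ω →ₘ[P] ℝ)) : TopologicalSpace E :=
  ballTop (ι := {e : ℝ // 0 < e} × {l : ℝ // 0 < l ∧ l < 1})
    (fun x i => {y | ENNReal.ofReal (1 - i.2.1) < P {ω | nrm (y - x) ω < i.1.1}})
    (by
      rintro x ⟨⟨e₁, he₁⟩, ⟨l₁, hl₁⟩⟩ ⟨⟨e₂, he₂⟩, ⟨l₂, hl₂⟩⟩
      refine ⟨⟨⟨min e₁ e₂, lt_min he₁ he₂⟩,
        ⟨min l₁ l₂, lt_min hl₁.1 hl₂.1, lt_of_le_of_lt (min_le_left _ _) hl₁.2⟩⟩,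
        fun y hy => ⟨?_, ?_⟩⟩ <;> simp only [Set.mem_setOf_eq] at hy ⊢
      · refine lt_of_le_of_lt (ENNReal.ofReal_le_ofReal (by
          have := min_le_left l₁ l₂; linarith)) (hy.trans_le (measure_mono fun ω hω =>
          show nrm (y - x) ω < e₁ from lt_of_lt_of_le hω (min_le_left _ _)))
      · refine lt_of_le_of_lt (ENNReal.ofReal_le_ofReal (by
          have := min_le_right l₁ l₂; linarith)) (hy.trans_le (measure_mono fun ω hω =>
          show nrm (y - x) ω < e₂ from lt_of_lt_of_le hω (min_le_right _ _))))

variable (P) in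
/-- the locally `L⁰`-convex weak star topology `σ_c` on the space of random linear
functionals on a module `M`, induced by the pairing with `M`. -/
noncomputable def sigmaCTop (M : Type*) [AddCommGroup M] [Module (Ω →ₘ[P] ℂ) M] :
    TopologicalSpace (M →ₗ[Ω →ₘ[P] ℂ] (Ω →ₘ[P] ℂ)) :=
  ballTop (ι := Finset M × {ε : Ω →ₘ[P] ℝ // L0pos ε})
    (fun g i => {h | ∀ x ∈ i.1, ltAE (L0abs (h x - g x)) i.2.1})
    (by
      classical
      rintro g ⟨s, ε, hε⟩ ⟨t, δ, hδ⟩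
      refine ⟨⟨s ∪ t, ⟨ε ⊓ δ, L0pos_inf hε hδ⟩⟩, fun h hh => ⟨?_, ?_⟩⟩
      · exact fun x hx => (ltAE_inf (hh x (Finset.mem_union_left t hx))).1
      · exact fun x hx => (ltAE_inf (hh x (Finset.mem_union_right s hx))).2)

variable (P) in
/-- the `(ε,λ)` weak star topology `σ_{(ε,λ)}` on the space of random linear functionals
on a module `M`, induced by the pairing with `M`. -/
noncomputable def sigmaElTop (M : Type*) [AddCommGroup M] [Module (Ω →ₘ[P] ℂ) M] :
    TopologicalSpace (M →ₗ[Ω →ₘ[P] ℂ] (Ω →ₘ[P] ℂ)) :=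
  ballTop (ι := Finset M × {e : ℝ // 0 < e} × {l : ℝ // 0 < l ∧ l < 1})
    (fun g i => {h | ∀ x ∈ i.1,
      ENNReal.ofReal (1 - i.2.2.1) < P {ω | (L0abs (h x - g x)) ω < i.2.1.1}})
    (by
      classical
      rintro g ⟨s, ⟨e₁, he₁⟩, ⟨l₁, hl₁⟩⟩ ⟨t, ⟨e₂, he₂⟩, ⟨l₂, hl₂⟩⟩
      refine ⟨⟨s ∪ t, ⟨min e₁ e₂, lt_min he₁ he₂⟩,
        ⟨min l₁ l₂, lt_min hl₁.1 hl₂.1, lt_of_le_of_lt (min_le_left _ _) hl₁.2⟩⟩,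
        fun h hh => ⟨fun x hx => ?_, fun x hx => ?_⟩⟩
      · refine lt_of_le_of_lt (ENNReal.ofReal_le_ofReal (by
          have := min_le_left l₁ l₂; linarith))
          ((hh x (Finset.mem_union_left t hx)).trans_le (measure_mono fun ω hω =>
            show (L0abs (h x - g x)) ω < e₁ from lt_of_lt_of_le hω (min_le_left _ _)))
      · refine lt_of_le_of_lt (ENNReal.ofReal_le_ofReal (by
          have := min_le_right l₁ l₂; linarith))
          ((hh x (Finset.mem_union_right s hx)).trans_le (measure_mono fun ω hω =>
            show (L0abs (h x - g x)) ω < e₂ from lt_of_lt_of_le hω (min_le_right _ _))))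

end Topologies

end RNM

/-!
Gram–Schmidt inside `W`, carried out `n + 1` times. At step `k`, the supports of the residuals
`w - ∑_{i<k} ⟨w, gᵢ⟩ gᵢ` (`w ∈ W`) are exhausted, up to null sets, by countably many of them; the
countable concatenation property glues the corresponding normalised residuals into one `g_k ∈ W`
which at almost every `ω` is either `0` (where every residual vanishes) or a unit vector
orthogonal to `g₀(ω), …, g_{k-1}(ω)`, all of which are then nonzero. Where an `(n+1)`-st residual
did not vanish, `g₀(ω), …, gₙ(ω)` would be `n + 1` orthogonal nonzero vectors of `ℂⁿ`; so every
`w ∈ W` equals `∑ ⟨w, gᵢ⟩ gᵢ`, and for `x ∉ W` the residual of `x` is nonzero and orthogonal to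
`W`. For the surjectivity, the range of `T` inherits the concatenation property, and a nonzero `z`
orthogonal to it gives `∑ conj(zᵢ) fᵢ = 0`.
-/

namespace RNM

open MeasureTheory Finset

section OrthResidual

variable (𝕜 : Type*) {E : Type*} [RCLike 𝕜] [NormedAddCommGroup E] [InnerProductSpace 𝕜 E]

def orthResidual (e : ℕ → E) (k : ℕ) (x : E) : E :=
  x - ∑ i ∈ range k, inner 𝕜 (e i) x • e i

def IsOrthonormalOrZero (k : ℕ) (e : ℕ → E) : Prop :=
  (∀ i < k, e i = 0 ∨ ‖e i‖ = 1) ∧ ∀ i < k, ∀ j < k, i ≠ j → inner 𝕜 (e i) (e j) = 0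

variable {𝕜} {e : ℕ → E} {k : ℕ}

lemma inner_orthResidual (he : IsOrthonormalOrZero 𝕜 k e) {j : ℕ} (hj : j < k) (x : E) :
    inner 𝕜 (e j) (orthResidual 𝕜 e k x) = 0 := by
  have hsum : inner 𝕜 (e j) (∑ i ∈ range k, inner 𝕜 (e i) x • e i) =
      inner 𝕜 (e j) x * inner 𝕜 (e j) (e j) := by
    rw [inner_sum, sum_eq_single_of_mem j (mem_range.2 hj) fun i hi hij => by
      rw [inner_smul_right, he.2 j hj i (mem_range.1 hi) (Ne.symm hij), mul_zero]]
    exact inner_smul_right _ _ _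
  rw [orthResidual, inner_sub_right, hsum]
  rcases he.1 j hj with h | h
  · simp [h]
  · simp [inner_self_eq_norm_sq_to_K, h]

lemma orthResidual_update_succ (x y : E) :
    orthResidual 𝕜 (Function.update e k x) (k + 1) y =
      orthResidual 𝕜 e k y - inner 𝕜 x y • x := by
  simp only [orthResidual, sum_range_succ, Function.update_self, sub_sub]
  congr 2
  exact sum_congr rfl fun i hi => by
    rw [Function.update_of_ne (mem_range.1 hi).ne]

lemma IsOrthonormalOrZero.update (he : IsOrthonormalOrZero 𝕜 k e) {x : E}
    (hx : x = 0 ∨ ‖x‖ = 1 ∧ ∀ i < k, inner 𝕜 (e i) x = 0) :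
    IsOrthonormalOrZero 𝕜 (k + 1) (Function.update e k x) := by
  refine ⟨fun i hi => ?_, fun i hi j hj hij => ?_⟩
  · rcases Nat.lt_succ_iff_lt_or_eq.1 hi with hi | rfl
    · rw [Function.update_of_ne hi.ne]
      exact he.1 i hi
    · rw [Function.update_self]
      exact hx.imp_right And.left
  · rcases Nat.lt_succ_iff_lt_or_eq.1 hi with hi | rfl <;>
      rcases Nat.lt_succ_iff_lt_or_eq.1 hj with hj | rfl
    · rw [Function.update_of_ne hi.ne, Function.update_of_ne hj.ne]
      exact he.2 i hi j hj hij
    · rw [Function.update_of_ne hi.ne, Function.update_self]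
      rcases hx with h | h
      · simp [h]
      · exact h.2 i hi
    · rw [Function.update_of_ne hj.ne, Function.update_self]
      rcases hx with h | h
      · simp [h]
      · exact inner_eq_zero_symm.1 (h.2 j hj)
    · exact absurd rfl hij

lemma inner_orthResidual_eq_zero_of_orthResidual_eq_zero (he : IsOrthonormalOrZero 𝕜 k e)
    {y : E} (hy : orthResidual 𝕜 e k y = 0) (x : E) :
    inner 𝕜 (orthResidual 𝕜 e k x) y = 0 := by
  rw [sub_eq_zero.1 hy, inner_sum]
  refine sum_eq_zero fun i hi => ?_
  rw [inner_smul_right, inner_eq_zero_symm.1 (inner_orthResidual he (mem_range.1 hi) x),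
    mul_zero]

lemma exists_eq_zero_of_isOrthonormalOrZero [FiniteDimensional 𝕜 E]
    (hk : Module.finrank 𝕜 E < k) (he : IsOrthonormalOrZero 𝕜 k e) : ∃ i < k, e i = 0 := by
  by_contra! hne
  have hli : LinearIndependent 𝕜 fun i : Fin k => e i :=
    linearIndependent_of_ne_zero_of_inner_eq_zero (fun i => hne i i.2)
      fun i j hij => he.2 i i.2 j j.2 (Fin.val_ne_of_ne hij)
  have := hli.fintype_card_le_finrank
  rw [Fintype.card_fin] at this
  omega

end OrthResidual

variable {Ω : Type} [MeasurableSpace Ω] {P : Measure Ω} {n : ℕ}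

section Pointwise

lemma ae_coeFn_sum {ι γ : Type*} [TopologicalSpace γ] [AddCommMonoid γ] [ContinuousAdd γ]
    (s : Finset ι) (F : ι → Ω →ₘ[P] γ) : ∀ᵐ ω ∂P, (∑ i ∈ s, F i) ω = ∑ i ∈ s, F i ω := by
  classical
  induction s using Finset.induction_on with
  | empty =>
    filter_upwards [AEEqFun.coeFn_zero (μ := P) (β := γ)] with ω h
    simpa using h
  | insert a s ha ih =>
    filter_upwards [AEEqFun.coeFn_add (F a) (∑ i ∈ s, F i), ih] with ω h1 h2
    rw [sum_insert ha, h1, Pi.add_apply, h2, sum_insert ha]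

noncomputable def vecAt (v : Fin n → Ω →ₘ[P] ℂ) (ω : Ω) : EuclideanSpace ℂ (Fin n) :=
  WithLp.toLp 2 fun i => v i ω

lemma ae_vecAt_zero : ∀ᵐ ω ∂P, vecAt (0 : Fin n → Ω →ₘ[P] ℂ) ω = 0 := by
  filter_upwards [AEEqFun.coeFn_zero (μ := P) (β := ℂ)] with ω h
  ext i
  exact h

lemma ae_vecAt_sub (v w : Fin n → Ω →ₘ[P] ℂ) :
    ∀ᵐ ω ∂P, vecAt (v - w) ω = vecAt v ω - vecAt w ω := by
  filter_upwards [ae_all_iff.2 fun i => AEEqFun.coeFn_sub (v i) (w i)] with ω h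
  ext i
  exact h i

lemma ae_vecAt_smul (c : Ω →ₘ[P] ℂ) (v : Fin n → Ω →ₘ[P] ℂ) :
    ∀ᵐ ω ∂P, vecAt (c • v) ω = c ω • vecAt v ω := by
  filter_upwards [ae_all_iff.2 fun i => AEEqFun.coeFn_mul c (v i)] with ω h
  ext i
  exact h i

lemma ae_vecAt_sum {ι : Type*} (s : Finset ι) (F : ι → Fin n → Ω →ₘ[P] ℂ) :
    ∀ᵐ ω ∂P, vecAt (∑ j ∈ s, F j) ω = ∑ j ∈ s, vecAt (F j) ω := by
  filter_upwards [ae_all_iff.2 fun i => ae_coeFn_sum s fun j => F j i] with ω h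
  ext i
  simp only [vecAt, Finset.sum_apply, h i, WithLp.ofLp_sum]

lemma eq_of_ae_vecAt_eq {v w : Fin n → Ω →ₘ[P] ℂ} (h : ∀ᵐ ω ∂P, vecAt v ω = vecAt w ω) :
    v = w := by
  funext i
  apply AEEqFun.ext
  filter_upwards [h] with ω hω
  exact congrArg (fun x : EuclideanSpace ℂ (Fin n) => x i) hω

lemma measurable_vecAt (v : Fin n → Ω →ₘ[P] ℂ) : Measurable (vecAt v) :=
  (PiLp.continuous_toLp 2 _).measurable.comp (measurable_pi_lambda _ fun i => (v i).measurable)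

lemma measurableSet_vecAt_ne_zero (v : Fin n → Ω →ₘ[P] ℂ) :
    MeasurableSet {ω | vecAt v ω ≠ 0} :=
  (measurable_vecAt v (measurableSet_singleton 0)).compl

noncomputable def rinner (v u : Fin n → Ω →ₘ[P] ℂ) : Ω →ₘ[P] ℂ :=
  ∑ i, v i * conjC (u i)

lemma ae_conjC (ξ : Ω →ₘ[P] ℂ) : ∀ᵐ ω ∂P, conjC ξ ω = starRingEnd ℂ (ξ ω) :=
  AEEqFun.coeFn_comp _ _ ξ

lemma ae_rinner (v u : Fin n → Ω →ₘ[P] ℂ) :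
    ∀ᵐ ω ∂P, rinner v u ω = inner ℂ (vecAt u ω) (vecAt v ω) := by
  filter_upwards [ae_coeFn_sum univ fun i => v i * conjC (u i),
    ae_all_iff.2 fun i => AEEqFun.coeFn_mul (v i) (conjC (u i)),
    ae_all_iff.2 fun i => ae_conjC (u i)] with ω hsum hmul hconj
  simp only [rinner, hsum, hmul, Pi.mul_apply, hconj, PiLp.inner_apply, RCLike.inner_apply,
    vecAt]

lemma conjC_conjC (ξ : Ω →ₘ[P] ℂ) : conjC (conjC ξ) = ξ := by
  apply AEEqFun.ext
  filter_upwards [ae_conjC (conjC ξ), ae_conjC ξ] with ω h1 h2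
  rw [h1, h2, Complex.conj_conj]

end Pointwise

section Residual

noncomputable def gsResidual (g : ℕ → Fin n → Ω →ₘ[P] ℂ) (k : ℕ)
    (w : Fin n → Ω →ₘ[P] ℂ) : Fin n → Ω →ₘ[P] ℂ :=
  w - ∑ i ∈ range k, rinner w (g i) • g i

lemma gsResidual_mem {W : Submodule (Ω →ₘ[P] ℂ) (Fin n → Ω →ₘ[P] ℂ)}
    {g : ℕ → Fin n → Ω →ₘ[P] ℂ} (hg : ∀ i, g i ∈ W) (k : ℕ) {w : Fin n → Ω →ₘ[P] ℂ}
    (hw : w ∈ W) : gsResidual g k w ∈ W :=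
  sub_mem hw (sum_mem fun i _ => W.smul_mem _ (hg i))

lemma ae_vecAt_gsResidual (g : ℕ → Fin n → Ω →ₘ[P] ℂ) (k : ℕ) (w : Fin n → Ω →ₘ[P] ℂ) :
    ∀ᵐ ω ∂P, vecAt (gsResidual g k w) ω =
      orthResidual ℂ (fun i => vecAt (g i) ω) k (vecAt w ω) := by
  filter_upwards [ae_vecAt_sub w (∑ i ∈ range k, rinner w (g i) • g i),
    ae_vecAt_sum (range k) fun i => rinner w (g i) • g i,
    ae_all_iff.2 fun i => ae_vecAt_smul (rinner w (g i)) (g i),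
    ae_all_iff.2 fun i => ae_rinner w (g i)] with ω hsub hsum hsmul hinner
  simp only [gsResidual, orthResidual, hsub, hsum, hsmul, hinner]

noncomputable def invNorm (v : Fin n → Ω →ₘ[P] ℂ) : Ω →ₘ[P] ℂ :=
  AEEqFun.mk (μ := P) (fun ω => ((‖vecAt v ω‖ : ℂ))⁻¹)
    (Complex.measurable_ofReal.comp (measurable_vecAt v).norm).inv.aestronglyMeasurable

lemma ae_vecAt_invNorm_smul (v : Fin n → Ω →ₘ[P] ℂ) :
    ∀ᵐ ω ∂P, vecAt (invNorm v • v) ω = ((‖vecAt v ω‖ : ℂ))⁻¹ • vecAt v ω := by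
  have hinv : ∀ᵐ ω ∂P, invNorm v ω = ((‖vecAt v ω‖ : ℂ))⁻¹ := AEEqFun.coeFn_mk _ _
  filter_upwards [ae_vecAt_smul (invNorm v) v, hinv] with ω h1 h2
  rw [h1, h2]

end Residual

lemma exists_seq_ae_subset_iUnion [SFinite P] {ι : Type*} [Nonempty ι] (S : ι → Set Ω)
    (hS : ∀ i, MeasurableSet (S i)) : ∃ u : ℕ → ι, ∀ i, S i ≤ᵐ[P] ⋃ m, S (u m) := by
  obtain ⟨D, hDS, hDc, hD⟩ :=
    Measure.exists_ae_subset_biUnion_countable P (C := Set.range S) (by grind)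
  obtain ⟨i₀⟩ := ‹Nonempty ι›
  obtain ⟨F, hF⟩ := (hDc.insert (S i₀)).exists_eq_range (Set.insert_nonempty _ _)
  have hFS : ∀ m, ∃ i, S i = F m := fun m =>
    (Set.insert_subset (Set.mem_range_self i₀) hDS) (hF ▸ Set.mem_range_self m)
  choose u hu using hFS
  refine ⟨u, fun i => (hD _ (Set.mem_range_self i)).trans (Filter.Eventually.of_forall ?_)⟩
  simp only [hu, ← Set.sUnion_range, ← hF]
  exact Set.sUnion_subset_sUnion (Set.subset_insert _ _)

section Gluing

def gluingPartition (A : ℕ → Set Ω) : ℕ → Set Ω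
  | 0 => (⋃ m, A m)ᶜ
  | m + 1 => disjointed A m

lemma isMPartition_gluingPartition {A : ℕ → Set Ω} (hA : ∀ m, MeasurableSet (A m)) :
    IsMPartition (gluingPartition A) where
  meas
    | 0 => (MeasurableSet.iUnion hA).compl
    | m + 1 => MeasurableSet.disjointed hA m
  disj
    | 0, 0, h => absurd rfl h
    | 0, m + 1, _ => Disjoint.mono_right
        ((disjointed_subset A m).trans (Set.subset_iUnion A m)) disjoint_compl_left
    | m + 1, 0, _ => Disjoint.mono_left
        ((disjointed_subset A m).trans (Set.subset_iUnion A m)) disjoint_compl_right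
    | l + 1, m + 1, h => disjoint_disjointed A fun hlm => h (congrArg (· + 1) hlm)
  cover := by
    refine Set.eq_univ_of_forall fun ω => ?_
    by_cases hω : ω ∈ ⋃ m, A m
    · rw [← iUnion_disjointed] at hω
      obtain ⟨m, hm⟩ := Set.mem_iUnion.1 hω
      exact Set.mem_iUnion.2 ⟨m + 1, hm⟩
    · exact Set.mem_iUnion.2 ⟨0, hω⟩

lemma SetCCP.exists_glue {M : Type*} [AddCommGroup M] [Module (Ω →ₘ[P] ℂ) M] {S : Set M}
    (hS : SetCCP (P := P) S) (h0 : (0 : M) ∈ S) {A : ℕ → Set Ω}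
    (hA : ∀ m, MeasurableSet (A m)) (x : ℕ → M) (hx : ∀ m, x m ∈ S) :
    ∃ x₀ ∈ S, indC (P := P) _ (MeasurableSet.iUnion hA).compl • x₀ = 0 ∧
      ∀ m, indC (P := P) _ (MeasurableSet.disjointed hA m) • x₀ =
        indC (P := P) _ (MeasurableSet.disjointed hA m) • x m := by
  obtain ⟨x₀, hx₀S, hx₀⟩ := hS _ (isMPartition_gluingPartition hA)
    (fun | 0 => 0 | m + 1 => x m) (fun | 0 => h0 | m + 1 => hx m)
  exact ⟨x₀, hx₀S, (hx₀ 0).trans (smul_zero _), fun m => hx₀ (m + 1)⟩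

lemma ae_vecAt_eq_of_indC_smul_eq {B : Set Ω} {hB : MeasurableSet B}
    {v u : Fin n → Ω →ₘ[P] ℂ} (h : indC (P := P) B hB • v = indC (P := P) B hB • u) :
    ∀ᵐ ω ∂P, ω ∈ B → vecAt v ω = vecAt u ω := by
  have hind : ∀ᵐ ω ∂P, indC (P := P) B hB ω = B.indicator (fun _ => 1) ω :=
    AEEqFun.coeFn_mk _ _
  filter_upwards [ae_vecAt_smul (indC B hB) v, ae_vecAt_smul (indC B hB) u, hind]
    with ω hv hu hind hω
  have hone : indC (P := P) B hB ω = 1 := by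
    rw [hind, Set.indicator_of_mem hω]
  simpa [hv, hu, hone] using congrArg (vecAt · ω) h

end Gluing

section GramSchmidt

variable {W : Submodule (Ω →ₘ[P] ℂ) (Fin n → Ω →ₘ[P] ℂ)} {k : ℕ}
  {g : ℕ → Fin n → Ω →ₘ[P] ℂ}

variable (W) in
structure IsGramSchmidtFamily (k : ℕ) (g : ℕ → Fin n → Ω →ₘ[P] ℂ) : Prop where
  mem : ∀ i, g i ∈ W
  ae_isOrthonormalOrZero : ∀ᵐ ω ∂P, IsOrthonormalOrZero ℂ k fun i => vecAt (g i) ω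
  ae_ne_zero_of_gsResidual_ne_zero : ∀ w ∈ W, ∀ᵐ ω ∂P,
    vecAt (gsResidual g k w) ω ≠ 0 → ∀ i < k, vecAt (g i) ω ≠ 0

lemma isGramSchmidtFamily_zero : IsGramSchmidtFamily W 0 fun _ => 0 where
  mem _ := W.zero_mem
  ae_isOrthonormalOrZero := Filter.Eventually.of_forall fun _ => ⟨by simp, by simp⟩
  ae_ne_zero_of_gsResidual_ne_zero _ _ :=
    Filter.Eventually.of_forall fun _ _ _ hi => absurd hi (Nat.not_lt_zero _)

lemma IsGramSchmidtFamily.exists_next [SFinite P]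
    (hW : SetCCP (P := P) (W : Set (Fin n → Ω →ₘ[P] ℂ))) (hg : IsGramSchmidtFamily W k g) :
    ∃ v ∈ W, (∀ᵐ ω ∂P, vecAt v ω = 0 ∨ ‖vecAt v ω‖ = 1 ∧
        ∀ i < k, inner ℂ (vecAt (g i) ω) (vecAt v ω) = 0 ∧ vecAt (g i) ω ≠ 0) ∧
      ∀ w ∈ W, ∀ᵐ ω ∂P, vecAt (gsResidual g k w) ω ≠ 0 → vecAt v ω ≠ 0 := by
  set S : W → Set Ω := fun w => {ω | vecAt (gsResidual g k w) ω ≠ 0}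
  have hS : ∀ w, MeasurableSet (S w) := fun w => measurableSet_vecAt_ne_zero _
  obtain ⟨u, hu⟩ := exists_seq_ae_subset_iUnion (P := P) S hS
  set r : ℕ → Fin n → Ω →ₘ[P] ℂ := fun m => gsResidual g k (u m)
  have hrW : ∀ m, r m ∈ W := fun m => gsResidual_mem hg.mem k (u m).2
  obtain ⟨v, hvW, hv₀, hv⟩ := hW.exists_glue W.zero_mem (fun m => hS (u m))
    (fun m => invNorm (r m) • r m) fun m => W.smul_mem _ (hrW m)
  have hvout : ∀ᵐ ω ∂P, ω ∉ ⋃ m, S (u m) → vecAt v ω = 0 := by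
    filter_upwards [ae_vecAt_eq_of_indC_smul_eq (hv₀.trans (smul_zero _).symm), ae_vecAt_zero]
      with ω h h0 hω
    rw [h hω, h0]
  have hvin : ∀ᵐ ω ∂P, ω ∈ ⋃ m, S (u m) → ‖vecAt v ω‖ = 1 ∧
      ∀ i < k, inner ℂ (vecAt (g i) ω) (vecAt v ω) = 0 ∧ vecAt (g i) ω ≠ 0 := by
    filter_upwards [ae_all_iff.2 fun m => ae_vecAt_eq_of_indC_smul_eq (hv m),
      ae_all_iff.2 fun m => ae_vecAt_invNorm_smul (r m),
      ae_all_iff.2 fun m => ae_vecAt_gsResidual g k (u m), hg.ae_isOrthonormalOrZero,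
      ae_all_iff.2 fun m => hg.ae_ne_zero_of_gsResidual_ne_zero (u m) (u m).2]
      with ω hvω hnorm hres horth hne hω
    rw [← iUnion_disjointed] at hω
    obtain ⟨m, hm⟩ := Set.mem_iUnion.1 hω
    have hrm : vecAt (r m) ω ≠ 0 := disjointed_subset _ m hm
    rw [hvω m hm, hnorm m]
    refine ⟨norm_smul_inv_norm hrm, fun i hi => ⟨?_, hne m hrm i hi⟩⟩
    rw [inner_smul_right, hres m, inner_orthResidual horth hi, mul_zero]
  refine ⟨v, hvW, ?_, fun w hw => ?_⟩
  · filter_upwards [hvout, hvin] with ω hout hin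
    by_cases hω : ω ∈ ⋃ m, S (u m)
    · exact Or.inr (hin hω)
    · exact Or.inl (hout hω)
  · filter_upwards [hu ⟨w, hw⟩, hvin] with ω hsub hin hω
    exact norm_ne_zero_iff.1 ((hin (hsub hω)).1.symm ▸ one_ne_zero)

lemma vecAt_update (v : Fin n → Ω →ₘ[P] ℂ) (ω : Ω) :
    (fun i => vecAt (Function.update g k v i) ω) =
      Function.update (fun i => vecAt (g i) ω) k (vecAt v ω) :=
  funext fun i => Function.apply_update (fun _ v => vecAt v ω) g k v i

lemma IsGramSchmidtFamily.exists_succ [SFinite P]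
    (hW : SetCCP (P := P) (W : Set (Fin n → Ω →ₘ[P] ℂ))) (hg : IsGramSchmidtFamily W k g) :
    ∃ g', IsGramSchmidtFamily W (k + 1) g' := by
  obtain ⟨v, hvW, hv, hvres⟩ := hg.exists_next hW
  refine ⟨Function.update g k v, ?_, ?_, fun w hw => ?_⟩
  · exact (Function.forall_update_iff g fun _ x => x ∈ W).2 ⟨hvW, fun i _ => hg.mem i⟩
  · filter_upwards [hg.ae_isOrthonormalOrZero, hv] with ω horth hvω
    rw [vecAt_update]
    exact horth.update (hvω.imp_right fun h => ⟨h.1, fun i hi => (h.2 i hi).1⟩)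
  · filter_upwards [ae_vecAt_gsResidual (Function.update g k v) (k + 1) w,
      ae_vecAt_gsResidual g k w, hv, hvres w hw] with ω hres' hres hvω hvresω hne
    rw [hres', vecAt_update, orthResidual_update_succ, ← hres] at hne
    rcases hvω with h0 | ⟨-, hgi⟩
    · exact absurd h0 (hvresω (by simpa [h0] using hne))
    · intro i hi
      rcases Nat.lt_succ_iff_lt_or_eq.1 hi with hi | rfl
      · rw [Function.update_of_ne hi.ne]
        exact (hgi i hi).2
      · rw [Function.update_self]
        intro h0
        exact hvresω (by simpa [h0] using hne) h0

lemma exists_isGramSchmidtFamily [SFinite P]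
    (hW : SetCCP (P := P) (W : Set (Fin n → Ω →ₘ[P] ℂ))) (k : ℕ) :
    ∃ g, IsGramSchmidtFamily W k g := by
  induction k with
  | zero => exact ⟨_, isGramSchmidtFamily_zero⟩
  | succ k ih => exact ih.elim fun g hg => hg.exists_succ hW

lemma IsGramSchmidtFamily.gsResidual_eq_zero (hg : IsGramSchmidtFamily W (n + 1) g)
    {w : Fin n → Ω →ₘ[P] ℂ} (hw : w ∈ W) : gsResidual g (n + 1) w = 0 := by
  apply eq_of_ae_vecAt_eq
  filter_upwards [hg.ae_isOrthonormalOrZero, hg.ae_ne_zero_of_gsResidual_ne_zero w hw,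
    ae_vecAt_zero] with ω horth hne h0
  rw [h0]
  by_contra hres
  obtain ⟨i, hi, hgi⟩ := exists_eq_zero_of_isOrthonormalOrZero
    (by rw [finrank_euclideanSpace_fin]; exact n.lt_succ_self) horth
  exact hne hres i hi hgi

theorem exists_ne_zero_forall_rinner_eq_zero [SFinite P]
    (hW : SetCCP (P := P) (W : Set (Fin n → Ω →ₘ[P] ℂ))) (hWt : W ≠ ⊤) :
    ∃ z : Fin n → Ω →ₘ[P] ℂ, z ≠ 0 ∧ ∀ w ∈ W, rinner w z = 0 := by
  obtain ⟨g, hg⟩ := exists_isGramSchmidtFamily hW (n + 1)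
  obtain ⟨x, hx⟩ : ∃ x, x ∉ W := by
    by_contra! h
    exact hWt (eq_top_iff.2 fun x _ => h x)
  refine ⟨gsResidual g (n + 1) x, fun h0 => hx ?_, fun w hw => ?_⟩
  · rw [sub_eq_zero.1 h0]
    exact sum_mem fun i _ => W.smul_mem _ (hg.mem i)
  · apply AEEqFun.ext
    filter_upwards [ae_rinner w (gsResidual g (n + 1) x), ae_vecAt_gsResidual g (n + 1) x,
      ae_vecAt_gsResidual g (n + 1) w, ae_vecAt_zero, hg.ae_isOrthonormalOrZero,
      AEEqFun.coeFn_zero (μ := P) (β := ℂ)] with ω hinner hx hw' h0 horth hzero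
    rw [hinner, hx, hzero]
    refine inner_orthResidual_eq_zero_of_orthResidual_eq_zero horth ?_ _
    rw [← hw', hg.gsResidual_eq_zero hw, h0]

end GramSchmidt

section Surjectivity

variable {E : Type*} [AddCommGroup E] [Module (Ω →ₘ[P] ℂ) E]

lemma conjC_zero : conjC (0 : Ω →ₘ[P] ℂ) = 0 := by
  apply AEEqFun.ext
  filter_upwards [ae_conjC (0 : Ω →ₘ[P] ℂ), AEEqFun.coeFn_zero (μ := P) (β := ℂ)] with ω h h0
  rw [h, h0, Pi.zero_apply, map_zero]

lemma HasCCP.setCCP_range (hE : HasCCP P E) {M : Type*} [AddCommGroup M]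
    [Module (Ω →ₘ[P] ℂ) M] (T : E →ₗ[Ω →ₘ[P] ℂ] M) :
    SetCCP (P := P) (LinearMap.range T : Set M) := by
  intro A hA x hx
  choose y hy using fun m => LinearMap.mem_range.1 (hx m)
  obtain ⟨y₀, hy₀⟩ := hE A hA y
  exact ⟨T y₀, LinearMap.mem_range_self T y₀, fun m => by rw [← map_smul, hy₀, map_smul, hy]⟩

theorem HasCCP.surjective_pi [SFinite P] (hE : HasCCP P E)
    (f : Fin n → E →ₗ[Ω →ₘ[P] ℂ] (Ω →ₘ[P] ℂ))
    (hind : ∀ lam : Fin n → Ω →ₘ[P] ℂ, ∑ k, lam k • f k = 0 → lam = 0) :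
    Function.Surjective (LinearMap.pi f) := by
  rw [← LinearMap.range_eq_top]
  by_contra hT
  obtain ⟨z, hz, horth⟩ := exists_ne_zero_forall_rinner_eq_zero (hE.setCCP_range _) hT
  have hconj : (fun i => conjC (z i)) = 0 := hind _ <| LinearMap.ext fun x => by
    simpa [rinner, mul_comm] using horth _ (LinearMap.mem_range_self _ x)
  refine hz (funext fun i => ?_)
  rw [← conjC_conjC (z i), congrFun hconj i, Pi.zero_apply, conjC_zero]

end Surjectivity

end RNM

open MeasureTheory RNM in
theorem orthogonal_complement_and_surjectivity_general {Ω : Type} [MeasurableSpace Ω]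
    {P : Measure Ω} [IsProbabilityMeasure P] (n : ℕ) {E : Type*}
    [AddCommGroup E] [Module (Ω →ₘ[P] ℂ) E] (hccp : HasCCP P E)
    (f : Fin n → (E →ₗ[Ω →ₘ[P] ℂ] (Ω →ₘ[P] ℂ)))
    (hind : ∀ lam : Fin n → Ω →ₘ[P] ℂ, ∑ k, lam k • f k = 0 → lam = 0) :
    (∀ W : Submodule (Ω →ₘ[P] ℂ) (Fin n → Ω →ₘ[P] ℂ),
      SetCCP (P := P) (W : Set (Fin n → Ω →ₘ[P] ℂ)) → W ≠ ⊤ →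
      ∃ z : Fin n → Ω →ₘ[P] ℂ, z ≠ 0 ∧ ∀ w ∈ W, ∑ i, w i * conjC (z i) = 0) ∧
    Function.Surjective (fun (x : E) (i : Fin n) => f i x) :=
  ⟨fun _ hW hWt => exists_ne_zero_forall_rinner_eq_zero hW hWt, hccp.surjective_pi f hind⟩

open MeasureTheory RNM in
/-- A proper `L⁰(𝓕,ℂ)`-submodule of `L⁰(𝓕,ℂⁿ)` with the countable concatenation property
admits a nonzero orthogonal element; consequently, for `L⁰(𝓕,ℂ)`-independent
`f₁,…,fₙ ∈ E*` on an `RN` module `E` with the countable concatenation property, the map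
`T x = (f₁(x),…,fₙ(x))` is surjective onto `L⁰(𝓕,ℂⁿ)`. -/
theorem orthogonal_complement_and_surjectivity {Ω : Type} [MeasurableSpace Ω]
    {P : Measure Ω} [IsProbabilityMeasure P] (n : ℕ) (hn : 0 < n) {E : Type*}
    [AddCommGroup E] [Module (Ω →ₘ[P] ℂ) E] (nrm : E → Ω →ₘ[P] ℝ)
    (hnrm : IsRNNorm nrm) (hccp : HasCCP P E)
    (f : Fin n → (E →ₗ[Ω →ₘ[P] ℂ] (Ω →ₘ[P] ℂ))) (hf : ∀ i, f i ∈ rdual nrm)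
    (hind : ∀ lam : Fin n → Ω →ₘ[P] ℂ, ∑ k, lam k • f k = 0 → lam = 0) :
    (∀ W : Submodule (Ω →ₘ[P] ℂ) (Fin n → Ω →ₘ[P] ℂ),
      SetCCP (P := P) (W : Set (Fin n → Ω →ₘ[P] ℂ)) → W ≠ ⊤ →
      ∃ z : Fin n → Ω →ₘ[P] ℂ, z ≠ 0 ∧ ∀ w ∈ W, ∑ i, w i * conjC (z i) = 0) ∧
    Function.Surjective (fun (x : E) (i : Fin n) => f i x) :=
  orthogonal_complement_and_surjectivity_general n hccp f hind
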